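/- Let f₁, …, f_n, g₁, …, g_n ∈ L^∞(∂D) and suppose Σ_{i=1}^n H_{f_i}* H_{g_i} = 0 as an operator on H². Then there exist an n × n complex matrix A with entries of modulus ≤ 1 and a permutation matrix R such that all entries of (R − A)(f₁, …, f_n)ᵀ and of A*(g₁, …, g_n)ᵀ belong to H^∞. -/

import Mathlib

/-!
With `e_k = z^k`, multiplication by `z` on `H²` gives `H_φ(z u) = z H_φ u − ⟨e₋₁, H_φ u⟩ e₀`,
and `⟨e₋₁, H_φ e_m⟩` is the Fourier coefficient `φ̂(−m−1)`. Comparing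
`∑ᵢ ⟨H_{gᵢ} u, H_{fᵢ} v⟩ = 0` at `(e_k, e_m)` and at `(e_{k+1}, e_{m+1})` therefore shows that
every vector `(ĝᵢ(l))ᵢ` with `l < 0` is orthogonal in `ℂⁿ` to every vector `(f̂ᵢ(l'))ᵢ` with
`l' < 0`. Take `R = 1` and `A` the orthogonal projection onto the span of the latter: `A` fixes
them and `A* = A` annihilates the former, so `(1 − A) f` and `A* g` have no negative Fourier
coefficients.
-/

noncomputable section
open MeasureTheory Complex
open scoped InnerProductSpace ComplexConjugate

set_option synthInstance.maxHeartbeats 400000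

namespace HardySpace

instance fact_two_pi_pos : Fact (0 < 2 * Real.pi) := ⟨by positivity⟩
abbrev 𝕋 : Type := AddCircle (2 * Real.pi)
abbrev μT : Measure 𝕋 := AddCircle.haarAddCircle
abbrev L2 : Type := Lp ℂ 2 μT
def cw : 𝕋 → ℂ := fun x => fourier 1 x
def Hardy : Submodule ℂ L2 :=
  (Submodule.span ℂ (Set.range fun n : ℕ => (fourierLp 2 (n : ℤ) : L2))).topologicalClosure
instance : CompleteSpace Hardy :=
  (Submodule.isClosed_topologicalClosure _).completeSpace_coe
def Pfull : L2 →L[ℂ] L2 := Hardy.subtypeL.comp (Submodule.orthogonalProjectionOnto Hardy)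

open Classical in
/-- The element of `L²` determined by an essentially bounded symbol
(junk value `0` if the function is not essentially bounded). -/
def symbolL2 (g : 𝕋 → ℂ) : L2 :=
  if hg : MemLp g ⊤ μT then (hg.mono_exponent le_top).toLp g else 0

/-- `g ∈ H^∞`: `g` is essentially bounded and lies in the Hardy space. -/
def InHinf (g : 𝕋 → ℂ) : Prop := MemLp g ⊤ μT ∧ symbolL2 g ∈ Hardy

theorem memMul {f : 𝕋 → ℂ} (hf : MemLp f ⊤ μT) (h : L2) :
    MemLp (fun x => f x * h x) 2 μT := by
  refine ⟨hf.aestronglyMeasurable.mul (Lp.aestronglyMeasurable h), ?_⟩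
  have key := eLpNorm_le_eLpNorm_top_mul_eLpNorm 2 f (Lp.aestronglyMeasurable h)
    (· * ·) 1 (Filter.Eventually.of_forall fun x => by simp [nnnorm_mul])
  rw [ENNReal.coe_one, one_mul] at key
  refine lt_of_le_of_lt key ?_
  exact ENNReal.mul_lt_top hf.2 (Lp.memLp h).2

open Classical in
/-- Multiplication by an `L^∞` symbol, as a bounded operator on `L²`
(defined to be `0` for symbols that are not essentially bounded). -/
def mulCLM (f : 𝕋 → ℂ) : L2 →L[ℂ] L2 :=
  if hf : MemLp f ⊤ μT then
    LinearMap.mkContinuousOfExistsBound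
      { toFun := fun h => (memMul hf h).toLp (fun x => f x * h x)
        map_add' := fun h k => by
          rw [← MemLp.toLp_add]
          apply MemLp.toLp_congr
          filter_upwards [AEEqFun.coeFn_add (h : 𝕋 →ₘ[μT] ℂ) (k : 𝕋 →ₘ[μT] ℂ)] with x hx
          simp only [show ((h + k : L2) : 𝕋 →ₘ[μT] ℂ) = (h : 𝕋 →ₘ[μT] ℂ) + (k : 𝕋 →ₘ[μT] ℂ)
            from rfl, hx, Pi.add_apply]
          ring
        map_smul' := fun c h => by
          simp only [RingHom.id_apply]
          rw [← MemLp.toLp_const_smul]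
          apply MemLp.toLp_congr
          filter_upwards [AEEqFun.coeFn_smul c (h : 𝕋 →ₘ[μT] ℂ)] with x hx
          simp only [show ((c • h : L2) : 𝕋 →ₘ[μT] ℂ) = c • (h : 𝕋 →ₘ[μT] ℂ) from rfl, hx,
            Pi.smul_apply, smul_eq_mul]
          ring }
      ⟨(eLpNorm f ⊤ μT).toReal, fun h => by
        simp only [LinearMap.coe_mk, AddHom.coe_mk]
        rw [Lp.norm_toLp, Lp.norm_def]
        rw [← ENNReal.toReal_mul]
        refine ENNReal.toReal_mono ?_ ?_
        · exact ENNReal.mul_ne_top hf.2.ne (Lp.memLp h).2.ne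
        · have key := eLpNorm_le_eLpNorm_top_mul_eLpNorm 2 f (Lp.aestronglyMeasurable h)
            (· * ·) 1 (Filter.Eventually.of_forall fun x => by simp [nnnorm_mul])
          rw [ENNReal.coe_one, one_mul] at key
          exact key⟩
  else 0

theorem continuous_cw : Continuous cw := map_continuous (fourier 1)

theorem norm_cw (x : 𝕋) : ‖cw x‖ = 1 := by
  rw [cw, fourier_apply]
  exact Circle.norm_coe _

theorem memVop (h : L2) : MemLp (fun x => conj (cw x) * conj (h x)) 2 μT := by
  refine MemLp.of_le_mul (c := 1) (Lp.memLp h)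
    ((continuous_cw.star.aestronglyMeasurable).mul
      (continuous_star.comp_aestronglyMeasurable (Lp.aestronglyMeasurable h)))
    (Filter.Eventually.of_forall fun x => ?_)
  simp [norm_cw x]

/-- The antiunitary operator `V` on `L²(∂D)` given by `(V h)(w) = conj(w) ⬝ conj(h(w))`. -/
def Vop (h : L2) : L2 := (memVop h).toLp _

/-- The Toeplitz operator `T_f h = P (f h)` on `H²`. -/
def Toeplitz (f : 𝕋 → ℂ) : Hardy →L[ℂ] Hardy :=
  (Submodule.orthogonalProjectionOnto Hardy).comp ((mulCLM f).comp Hardy.subtypeL)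

/-- The Hankel operator `H_f h = (I − P)(f h)`, from `H²` into `L²` (with range in `L² ⊖ H²`). -/
def Hankel (f : 𝕋 → ℂ) : Hardy →L[ℂ] L2 :=
  (ContinuousLinearMap.id ℂ L2 - Pfull).comp ((mulCLM f).comp Hardy.subtypeL)

/-- The Möbius map `φ_z`, viewed as a function on the circle. -/
def phiC (z : ℂ) : 𝕋 → ℂ := fun x => (z - cw x) / (1 - conj z * cw x)

/-- The normalized reproducing kernel `k_z` as a function on the circle. -/
def kfun (z : ℂ) : 𝕋 → ℂ := fun x => (Real.sqrt (1 - ‖z‖ ^ 2) : ℂ) / (1 - conj z * cw x)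

/-- The normalized reproducing kernel `k_z` as an element of `L²`. -/
def kz (z : ℂ) : L2 := symbolL2 (kfun z)

/-- The normalized reproducing kernel `k_z` as an element of the Hardy space `H²`
(for `|z| < 1`, `k_z` lies in `H²`, so this is just `k_z`). -/
def kzH (z : ℂ) : Hardy := Submodule.orthogonalProjectionOnto Hardy (kz z)

/-- The antianalytic part `f₋ = (I − P) f` of a bounded symbol, as a function. -/
def minusPart (f : 𝕋 → ℂ) : 𝕋 → ℂ := (symbolL2 f - Pfull (symbolL2 f) : L2)

/-- The harmonic (Poisson) extension of `h ∈ L¹(∂D)` at `z ∈ D`: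
`h(z) = ∫ h(w) (1 − |z|²)/|1 − w z̄|² dσ(w)`. -/
def poisson (h : 𝕋 → ℂ) (z : ℂ) : ℂ :=
  ∫ x, h x * (((1 - ‖z‖ ^ 2) / ‖1 - cw x * conj z‖ ^ 2 : ℝ) : ℂ) ∂μT

/-- The Poisson extension of a real-valued function. -/
def poissonR (h : 𝕋 → ℝ) (z : ℂ) : ℝ :=
  ∫ x, h x * ((1 - ‖z‖ ^ 2) / ‖1 - cw x * conj z‖ ^ 2) ∂μT

open Classical in
/-- The Möbius map `φ_z` viewed as a self-map of the circle `∂D` (for `|z| < 1`,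
`φ_z` maps the circle to itself). -/
def phiT (z : ℂ) : 𝕋 → 𝕋 := fun x =>
  if h : ‖phiC z x‖ = 1 then
    AddCircle.homeomorphCircle'.symm ⟨phiC z x, mem_sphere_zero_iff_norm.2 h⟩
  else x

/-- `H²(ℂⁿ) = H² ⊕ ⋯ ⊕ H²`. -/
abbrev HardyN (n : ℕ) := PiLp 2 (fun _ : Fin n => Hardy)
/-- `L²(ℂⁿ) = L² ⊕ ⋯ ⊕ L²`. -/
abbrev L2N (n : ℕ) := PiLp 2 (fun _ : Fin n => L2)

instance {n : ℕ} : CompleteSpace (HardyN n) :=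
  inferInstance
instance {n : ℕ} : CompleteSpace (L2N n) :=
  inferInstance

/-- The operator `(Fin n × Fin n)`-matrix of operators acting on direct sums. -/
def matrixCLM {n : ℕ} {A B : Type*} [NormedAddCommGroup A] [NormedAddCommGroup B]
    [NormedSpace ℂ A] [NormedSpace ℂ B] (T : Fin n → Fin n → (A →L[ℂ] B)) :
    (PiLp 2 fun _ : Fin n => A) →L[ℂ] (PiLp 2 fun _ : Fin n => B) :=
  ((PiLp.continuousLinearEquiv 2 ℂ (fun _ : Fin n => B)).symm.toContinuousLinearMap.comp
    (ContinuousLinearMap.pi fun i => ∑ j, (T i j).comp (ContinuousLinearMap.proj j))).comp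
    (PiLp.continuousLinearEquiv 2 ℂ (fun _ : Fin n => A)).toContinuousLinearMap

/-- The block Toeplitz operator `T_F` on `H²(ℂⁿ)`, given by the operator matrix `(T_{f_ij})`. -/
def blockToeplitz {n : ℕ} (F : Fin n → Fin n → 𝕋 → ℂ) : HardyN n →L[ℂ] HardyN n :=
  matrixCLM fun i j => Toeplitz (F i j)

/-- The block Hankel operator `H_F` from `H²(ℂⁿ)` to `L²(ℂⁿ)`, given by the
operator matrix `(H_{f_ij})`. -/
def blockHankel {n : ℕ} (F : Fin n → Fin n → 𝕋 → ℂ) : HardyN n →L[ℂ] L2N n :=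
  matrixCLM fun i j => Hankel (F i j)

/-- Pointwise product of matrix symbols. -/
def symMul {n : ℕ} (F G : Fin n → Fin n → 𝕋 → ℂ) : Fin n → Fin n → 𝕋 → ℂ :=
  fun i j x => ∑ k, F i k x * G k j x

/-- Pointwise conjugate transpose `F*` of a matrix symbol. -/
def symStar {n : ℕ} (F : Fin n → Fin n → 𝕋 → ℂ) : Fin n → Fin n → 𝕋 → ℂ :=
  fun i j x => conj (F j i x)

/-- The rank-one operator `x ⊗ y` given by `(x ⊗ y) f = ⟨f, y⟩ x`, where the inner
product `⟨·,·⟩` is linear in the first argument. -/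
def rankOne {E F : Type*} [NormedAddCommGroup E] [InnerProductSpace ℂ E]
    [NormedAddCommGroup F] [InnerProductSpace ℂ F] (x : F) (y : E) : E →L[ℂ] F :=
  (innerSL ℂ y).smulRight x

open Matrix in
theorem exists_matrix_mulVec_eq_self_and_conjTranspose_mulVec_eq_zero {𝕜 ι κ₁ κ₂ : Type*}
    [RCLike 𝕜] [Fintype ι] [DecidableEq ι] (F : κ₁ → ι → 𝕜) (G : κ₂ → ι → 𝕜)
    (hFG : ∀ k m, star (G k) ⬝ᵥ F m = 0) :
    ∃ A : Matrix ι ι 𝕜, (∀ i j, ‖A i j‖ ≤ 1) ∧ (∀ m, A *ᵥ F m = F m) ∧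
      ∀ k, Aᴴ *ᵥ G k = 0 := by
  set E := Submodule.span 𝕜 (Set.range fun m => WithLp.toLp 2 (F m))
  set A := toEuclideanLin.symm E.starProjection.toLinearMap
  have hA (v : ι → 𝕜) : A *ᵥ v = E.starProjection (WithLp.toLp 2 v) := by
    change WithLp.ofLp (toEuclideanLin A (WithLp.toLp 2 v)) = _
    rw [LinearEquiv.apply_symm_apply]
    rfl
  have hherm : Aᴴ = A :=
    (isSymmetric_toEuclideanLin_iff.1 (by simpa [A] using E.starProjection_isSymmetric)).eq
  have hEG : E ⟂ Submodule.span 𝕜 (Set.range fun k => WithLp.toLp 2 (G k)) := by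
    refine Submodule.isOrtho_span.2 ?_
    rintro _ ⟨m, rfl⟩ _ ⟨k, rfl⟩
    simpa [PiLp.inner_apply, dotProduct, mul_comm] using congrArg star (hFG k m)
  refine ⟨A, fun i j => ?_, fun m => ?_, fun k => ?_⟩
  · calc ‖A i j‖ = ‖E.starProjection (EuclideanSpace.single j 1) i‖ := by
          rw [← hA]
          simp [mulVec_single]
      _ ≤ ‖E.starProjection (EuclideanSpace.single j (1 : 𝕜))‖ := PiLp.norm_apply_le _ _
      _ ≤ ‖EuclideanSpace.single j (1 : 𝕜)‖ := E.norm_starProjection_apply_le _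
      _ = 1 := by simp
  · rw [hA, E.starProjection_eq_self_iff.2 (Submodule.subset_span ⟨m, rfl⟩)]
  · have hGk : WithLp.toLp 2 (G k) ∈ Eᗮ := hEG.ge (Submodule.subset_span ⟨k, rfl⟩)
    rw [hherm, hA, E.starProjection_apply_eq_zero_iff.2 hGk]
    rfl

theorem inner_eq_integral (x y : L2) : ⟪x, y⟫_ℂ = ∫ t, conj (x t) * y t ∂μT := by
  rw [L2.inner_def]
  exact integral_congr_ae (.of_forall fun t => mul_comm _ _)

theorem inner_fourierLp_eq_fourierCoeff (x : L2) (l : ℤ) :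
    ⟪fourierLp 2 l, x⟫_ℂ = fourierCoeff x l := by
  rw [← fourierBasis_repr, fourierBasis.repr_apply_apply, coe_fourierBasis]

theorem fourierLp_mem_Hardy (m : ℕ) : fourierLp 2 (m : ℤ) ∈ Hardy :=
  Submodule.le_topologicalClosure _ (Submodule.subset_span ⟨m, rfl⟩)

theorem mem_Hardy_orthogonal_of_inner_fourierLp {v : L2}
    (hv : ∀ m : ℕ, ⟪fourierLp 2 (m : ℤ), v⟫_ℂ = 0) : v ∈ Hardyᗮ := by
  rw [Submodule.mem_orthogonal']
  intro u hu
  have : Hardy ≤ LinearMap.ker (innerSL ℂ v : L2 →ₗ[ℂ] ℂ) := by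
    refine Submodule.topologicalClosure_minimal _ ?_ (innerSL ℂ v).isClosed_ker
    rw [Submodule.span_le]
    rintro _ ⟨m, rfl⟩
    rw [SetLike.mem_coe, LinearMap.mem_ker, ContinuousLinearMap.coe_coe, innerSL_apply_apply,
      ← inner_conj_symm, hv m, map_zero]
  exact this hu

theorem fourierLp_mem_Hardy_orthogonal {l : ℤ} (hl : l < 0) : fourierLp 2 l ∈ Hardyᗮ :=
  mem_Hardy_orthogonal_of_inner_fourierLp fun _ => orthonormal_fourier.2 (by omega)

theorem mem_Hardy_of_fourierCoeff_eq_zero {x : L2} (hx : ∀ l < 0, fourierCoeff x l = 0) :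
    x ∈ Hardy := by
  refine (Submodule.isClosed_topologicalClosure _).mem_of_tendsto (hasSum_fourier_series_L2 x)
    (.of_forall fun s => Submodule.sum_mem _ fun l _ => ?_)
  rcases lt_or_ge l 0 with hl | hl
  · simp [hx l hl]
  · lift l to ℕ using hl
    exact Submodule.smul_mem _ _ (fourierLp_mem_Hardy l)

theorem memLp_cw : MemLp cw ⊤ μT :=
  memLp_top_of_bound continuous_cw.aestronglyMeasurable 1 (.of_forall fun x => (norm_cw x).le)

theorem coeFn_mulCLM {φ : 𝕋 → ℂ} (hφ : MemLp φ ⊤ μT) (x : L2) :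
    (mulCLM φ x : 𝕋 → ℂ) =ᵐ[μT] fun t => φ t * x t := by
  rw [mulCLM, dif_pos hφ, LinearMap.mkContinuousOfExistsBound_apply]
  exact MemLp.coeFn_toLp (memMul hφ x)

theorem coeFn_symbolL2 {φ : 𝕋 → ℂ} (hφ : MemLp φ ⊤ μT) : (symbolL2 φ : 𝕋 → ℂ) =ᵐ[μT] φ := by
  rw [symbolL2, dif_pos hφ]
  exact MemLp.coeFn_toLp _

theorem mulCLM_cw_fourierLp (l : ℤ) : mulCLM cw (fourierLp 2 l) = fourierLp 2 (l + 1) := by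
  apply Lp.ext
  filter_upwards [coeFn_mulCLM memLp_cw (fourierLp 2 l), coeFn_fourierLp 2 l,
    coeFn_fourierLp 2 (l + 1)] with t h1 h2 h3
  rw [h1, h2, h3, cw, add_comm l 1, fourier_add]

theorem mulCLM_cw_mem_Hardy {x : L2} (hx : x ∈ Hardy) : mulCLM cw x ∈ Hardy := by
  suffices Hardy ≤ Hardy.comap (mulCLM cw : L2 →ₗ[ℂ] L2) from this hx
  refine Submodule.topologicalClosure_minimal _ ?_
    ((Submodule.isClosed_topologicalClosure _).preimage (mulCLM cw).continuous)
  rw [Submodule.span_le]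
  rintro _ ⟨m, rfl⟩
  change mulCLM cw (fourierLp 2 (m : ℤ)) ∈ Hardy
  rw [mulCLM_cw_fourierLp]
  exact_mod_cast fourierLp_mem_Hardy (m + 1)

theorem inner_mulCLM_cw_mulCLM_cw (x y : L2) :
    ⟪mulCLM cw x, mulCLM cw y⟫_ℂ = ⟪x, y⟫_ℂ := by
  rw [inner_eq_integral, inner_eq_integral]
  refine integral_congr_ae ?_
  filter_upwards [coeFn_mulCLM memLp_cw x, coeFn_mulCLM memLp_cw y] with t h1 h2
  have hcw : conj (cw t) * cw t = 1 := by
    rw [cw, ← fourier_neg, ← fourier_add, neg_add_cancel, fourier_zero]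
  rw [h1, h2, map_mul, mul_mul_mul_comm, hcw, one_mul]

theorem inner_fourierLp_mulCLM_cw (x : L2) (l : ℤ) :
    ⟪fourierLp 2 l, mulCLM cw x⟫_ℂ = ⟪fourierLp 2 (l - 1), x⟫_ℂ := by
  rw [← inner_mulCLM_cw_mulCLM_cw (fourierLp 2 (l - 1)), mulCLM_cw_fourierLp, sub_add_cancel]

theorem hankel_apply (φ : 𝕋 → ℂ) (u : Hardy) :
    Hankel φ u = mulCLM φ u - Hardy.starProjection (mulCLM φ u) := rfl

theorem hankel_mem_Hardy_orthogonal (φ : 𝕋 → ℂ) (u : Hardy) : Hankel φ u ∈ Hardyᗮ :=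
  Hardy.sub_starProjection_mem_orthogonal _

theorem starProjection_mulCLM_cw_of_mem_orthogonal {a : L2} (ha : a ∈ Hardyᗮ) :
    Hardy.starProjection (mulCLM cw a) = ⟪fourierLp 2 (-1), a⟫_ℂ • fourierLp 2 0 := by
  refine Hardy.eq_starProjection_of_mem_orthogonal (Hardy.smul_mem _ (fourierLp_mem_Hardy 0))
    (mem_Hardy_orthogonal_of_inner_fourierLp fun m => ?_)
  rw [inner_sub_right, inner_smul_right, inner_fourierLp_mulCLM_cw,
    orthonormal_iff_ite.1 orthonormal_fourier]
  rcases m with _ | m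
  · simp
  · have : ⟪fourierLp 2 (m : ℤ), a⟫_ℂ = 0 :=
      Submodule.inner_right_of_mem_orthogonal (fourierLp_mem_Hardy m) ha
    simp [this, show (m : ℤ) + 1 ≠ 0 by omega]

def shift (u : Hardy) : Hardy := ⟨mulCLM cw u, mulCLM_cw_mem_Hardy u.2⟩

theorem hankel_shift {φ : 𝕋 → ℂ} (hφ : MemLp φ ⊤ μT) (u : Hardy) :
    Hankel φ (shift u) =
      mulCLM cw (Hankel φ u) - ⟪fourierLp 2 (-1), Hankel φ u⟫_ℂ • fourierLp 2 0 := by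
  have hcomm : mulCLM φ (mulCLM cw u) = mulCLM cw (mulCLM φ u) := by
    apply Lp.ext
    filter_upwards [coeFn_mulCLM hφ (mulCLM cw u), coeFn_mulCLM memLp_cw u,
      coeFn_mulCLM memLp_cw (mulCLM φ u), coeFn_mulCLM hφ u] with t h1 h2 h3 h4
    rw [h1, h2, h3, h4]
    ring
  have hP : Hardy.starProjection (mulCLM cw (Hardy.starProjection (mulCLM φ u))) =
      mulCLM cw (Hardy.starProjection (mulCLM φ u)) :=
    Hardy.starProjection_eq_self_iff.2 (mulCLM_cw_mem_Hardy (Hardy.starProjection_apply_mem _))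
  rw [← starProjection_mulCLM_cw_of_mem_orthogonal (hankel_mem_Hardy_orthogonal φ u),
    hankel_apply, hankel_apply, show ((shift u : Hardy) : L2) = mulCLM cw u from rfl, hcomm,
    map_sub, map_sub, hP]
  abel

theorem inner_hankel_shift {φ ψ : 𝕋 → ℂ} (hφ : MemLp φ ⊤ μT) (hψ : MemLp ψ ⊤ μT)
    (u v : Hardy) :
    ⟪Hankel ψ (shift u), Hankel φ (shift v)⟫_ℂ = ⟪Hankel ψ u, Hankel φ v⟫_ℂ
      - conj ⟪fourierLp 2 (-1), Hankel ψ u⟫_ℂ * ⟪fourierLp 2 (-1), Hankel φ v⟫_ℂ := by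
  have h0 (x : L2) : ⟪fourierLp 2 0, mulCLM cw x⟫_ℂ = ⟪fourierLp 2 (-1), x⟫_ℂ := by
    rw [inner_fourierLp_mulCLM_cw, zero_sub]
  rw [hankel_shift hψ, hankel_shift hφ, inner_sub_left, inner_sub_right, inner_sub_right,
    inner_smul_left, inner_smul_left, inner_smul_right, inner_smul_right,
    inner_mulCLM_cw_mulCLM_cw, ← inner_conj_symm (mulCLM cw _), h0, h0,
    orthonormal_iff_ite.1 orthonormal_fourier]
  simp only [if_true]
  ring

theorem inner_fourierLp_neg_one_hankel {φ : 𝕋 → ℂ} (hφ : MemLp φ ⊤ μT) (m : ℕ) :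
    ⟪fourierLp 2 (-1), Hankel φ ⟨_, fourierLp_mem_Hardy m⟩⟫_ℂ = fourierCoeff φ (-m - 1) := by
  rw [hankel_apply, inner_sub_right, Submodule.inner_left_of_mem_orthogonal
    (Hardy.starProjection_apply_mem _) (fourierLp_mem_Hardy_orthogonal (by norm_num)),
    sub_zero, inner_eq_integral, fourierCoeff]
  refine integral_congr_ae ?_
  filter_upwards [coeFn_fourierLp 2 (-1), coeFn_mulCLM hφ (fourierLp 2 (m : ℤ)),
    coeFn_fourierLp 2 (m : ℤ)] with t h1 h2 h3
  rw [h1, h2, h3, ← fourier_neg, neg_neg, neg_sub, sub_neg_eq_add, add_comm, fourier_add,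
    smul_eq_mul]
  ring

theorem sum_inner_hankel_eq_zero {n : ℕ} {f g : Fin n → 𝕋 → ℂ}
    (h : ∑ i, (Hankel (f i)).adjoint.comp (Hankel (g i)) = 0) (u v : Hardy) :
    ∑ i, ⟪Hankel (g i) u, Hankel (f i) v⟫_ℂ = 0 := by
  simpa [sum_inner, ContinuousLinearMap.adjoint_inner_left] using
    congrArg (fun T => ⟪T u, v⟫_ℂ) h

theorem sum_conj_fourierCoeff_mul_fourierCoeff_eq_zero {n : ℕ} {f g : Fin n → 𝕋 → ℂ}
    (hf : ∀ i, MemLp (f i) ⊤ μT) (hg : ∀ i, MemLp (g i) ⊤ μT)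
    (h : ∑ i, (Hankel (f i)).adjoint.comp (Hankel (g i)) = 0) {k l : ℤ} (hk : k < 0)
    (hl : l < 0) : ∑ i, conj (fourierCoeff (g i) k) * fourierCoeff (f i) l = 0 := by
  obtain ⟨k, rfl⟩ : ∃ k' : ℕ, k = -k' - 1 := ⟨(-k - 1).toNat, by omega⟩
  obtain ⟨l, rfl⟩ : ∃ l' : ℕ, l = -l' - 1 := ⟨(-l - 1).toNat, by omega⟩
  set u : Hardy := ⟨_, fourierLp_mem_Hardy k⟩
  set v : Hardy := ⟨_, fourierLp_mem_Hardy l⟩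
  calc ∑ i, conj (fourierCoeff (g i) (-k - 1)) * fourierCoeff (f i) (-l - 1)
      = ∑ i, ⟪Hankel (g i) u, Hankel (f i) v⟫_ℂ
          - ∑ i, ⟪Hankel (g i) (shift u), Hankel (f i) (shift v)⟫_ℂ := by
        rw [← Finset.sum_sub_distrib]
        refine Finset.sum_congr rfl fun i _ => ?_
        rw [inner_hankel_shift (hf i) (hg i), inner_fourierLp_neg_one_hankel (hf i),
          inner_fourierLp_neg_one_hankel (hg i)]
        ring
    _ = 0 := by rw [sum_inner_hankel_eq_zero h, sum_inner_hankel_eq_zero h, sub_zero]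

theorem inHinf_of_fourierCoeff_eq_zero {φ : 𝕋 → ℂ} (hφ : MemLp φ ⊤ μT)
    (h : ∀ l < 0, fourierCoeff φ l = 0) : InHinf φ := by
  refine ⟨hφ, mem_Hardy_of_fourierCoeff_eq_zero fun l hl => ?_⟩
  rw [fourierCoeff_congr_ae (coeFn_symbolL2 hφ), h l hl]

theorem inHinf_sum_mul {ι : Type*} [Fintype ι] {φ : ι → 𝕋 → ℂ} (hφ : ∀ i, MemLp (φ i) ⊤ μT)
    (c : ι → ℂ) (hc : ∀ l < 0, ∑ i, c i * fourierCoeff (φ i) l = 0) :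
    InHinf fun x => ∑ i, c i * φ i x := by
  have hsum : (fun x => ∑ i, c i * φ i x) = ∑ i, fun x => c i * φ i x :=
    (Finset.sum_fn _ _).symm
  refine inHinf_of_fourierCoeff_eq_zero
    (memLp_finsetSum _ fun i _ => (hφ i).const_mul (c i)) fun l hl => ?_
  rw [hsum, fourierCoeff.sum _ _ fun i _ => ((hφ i).const_mul (c i)).integrable le_top]
  simpa [fourierCoeff.const_mul] using hc l hl

open Matrix in
/-- If `∑ i, H_{f_i}* H_{g_i} = 0` then there are `A ∈ (M_{n×n})₁` and a permutation
matrix `R` with all entries of `(R − A) f` and of `A* g` in `H^∞`. -/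
theorem exists_matrix_perm_of_sum_hankel_eq_zero (n : ℕ) (f g : Fin n → 𝕋 → ℂ)
    (hf : ∀ i, MemLp (f i) ⊤ μT) (hg : ∀ i, MemLp (g i) ⊤ μT)
    (h : ∑ i, (Hankel (f i)).adjoint.comp (Hankel (g i)) = 0) :
    ∃ (A : Matrix (Fin n) (Fin n) ℂ) (σ : Equiv.Perm (Fin n)),
      (∀ i j, ‖A i j‖ ≤ 1) ∧
      (∀ j, InHinf fun x => ∑ i, ((σ.permMatrix ℂ - A) j i) * f i x) ∧
      (∀ j, InHinf fun x => ∑ i, (Aᴴ j i) * g i x) := by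
  set F : Set.Iio (0 : ℤ) → Fin n → ℂ := fun l i => fourierCoeff (f i) l
  set G : Set.Iio (0 : ℤ) → Fin n → ℂ := fun l i => fourierCoeff (g i) l
  obtain ⟨A, hA, hAF, hAG⟩ := exists_matrix_mulVec_eq_self_and_conjTranspose_mulVec_eq_zero F G
    fun k l => sum_conj_fourierCoeff_mul_fourierCoeff_eq_zero hf hg h k.2 l.2
  refine ⟨A, 1, hA, fun j => inHinf_sum_mul hf _ fun l hl => ?_,
    fun j => inHinf_sum_mul hg _ fun l hl => ?_⟩
  · rw [permMatrix_one]
    change ((1 - A) *ᵥ F ⟨l, hl⟩) j = 0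
    rw [sub_mulVec, one_mulVec, hAF, sub_self, Pi.zero_apply]
  · change (Aᴴ *ᵥ G ⟨l, hl⟩) j = 0
    rw [hAG, Pi.zero_apply]

end HardySpace
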